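/- arXiv:2001.06098 — 2 statements merged into one kernel-verified Lean document; each statement's English description precedes it below -/
import Mathlib

section
/- For smooth functions φ₁, φ₂ : ℝ₊ → ℝ₊, the composition satisfies ‖φ₁ ∘ φ₂‖₂,poly ≤ ‖φ₁‖₂,poly · ‖φ₂‖₂,poly². -/
/-- The quantity `‖φ‖₂,poly = sup_{s>0} (1 + s|φ'(s)|/φ(s) + s²|φ''(s)|/φ(s))`,
allowed to be `+∞`. -/
noncomputable def polyNorm (φ : ℝ → ℝ) : ENNReal :=
  ⨆ s ∈ Set.Ioi (0 : ℝ),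
    ENNReal.ofReal (1 + s * |deriv φ s| / φ s + s ^ 2 * |deriv (deriv φ) s| / φ s)

/-- Composition: `‖φ₁ ∘ φ₂‖₂,poly ≤ ‖φ₁‖₂,poly · ‖φ₂‖₂,poly²`. -/
theorem polyNorm_comp_le (φ₁ φ₂ : ℝ → ℝ)
    (h₁ : ContDiffOn ℝ (⊤ : ℕ∞) φ₁ (Set.Ioi 0)) (h₂ : ContDiffOn ℝ (⊤ : ℕ∞) φ₂ (Set.Ioi 0))
    (hp₁ : ∀ s ∈ Set.Ioi (0 : ℝ), 0 < φ₁ s) (hp₂ : ∀ s ∈ Set.Ioi (0 : ℝ), 0 < φ₂ s) :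
    polyNorm (φ₁ ∘ φ₂) ≤ polyNorm φ₁ * polyNorm φ₂ ^ 2 := by
  have hIo : IsOpen (Set.Ioi (0:ℝ)) := isOpen_Ioi
  have h1d : ContDiffOn ℝ (⊤ : ℕ∞) (deriv φ₁) (Set.Ioi 0) := h₁.deriv_of_isOpen hIo (by simp)
  have h2d : ContDiffOn ℝ (⊤ : ℕ∞) (deriv φ₂) (Set.Ioi 0) := h₂.deriv_of_isOpen hIo (by simp)
  have hd1 : ∀ u ∈ Set.Ioi (0:ℝ), DifferentiableAt ℝ φ₁ u := fun u hu =>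
    (h₁.contDiffAt (hIo.mem_nhds hu)).differentiableAt (by simp)
  have hd2 : ∀ u ∈ Set.Ioi (0:ℝ), DifferentiableAt ℝ φ₂ u := fun u hu =>
    (h₂.contDiffAt (hIo.mem_nhds hu)).differentiableAt (by simp)
  have hd1' : ∀ u ∈ Set.Ioi (0:ℝ), DifferentiableAt ℝ (deriv φ₁) u := fun u hu =>
    (h1d.contDiffAt (hIo.mem_nhds hu)).differentiableAt (by simp)
  have hd2' : ∀ u ∈ Set.Ioi (0:ℝ), DifferentiableAt ℝ (deriv φ₂) u := fun u hu =>
    (h2d.contDiffAt (hIo.mem_nhds hu)).differentiableAt (by simp)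
  have hderiv : ∀ u ∈ Set.Ioi (0:ℝ), deriv (φ₁ ∘ φ₂) u = deriv φ₁ (φ₂ u) * deriv φ₂ u :=
    fun u hu => deriv_comp u (hd1 _ (hp₂ u hu)) (hd2 u hu)
  rw [polyNorm]
  refine iSup₂_le fun s hs => ?_
  have hs0 : (0:ℝ) < s := hs
  set t := φ₂ s with ht
  have ht0 : 0 < t := hp₂ s hs
  have htI : t ∈ Set.Ioi (0:ℝ) := ht0
  have hc : 0 < φ₁ t := hp₁ t htI
  have hmem : Set.Ioi (0:ℝ) ∈ nhds s := hIo.mem_nhds hs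
  have hD1 : deriv (φ₁ ∘ φ₂) s = deriv φ₁ t * deriv φ₂ s := hderiv s hs
  have hD2 : deriv (deriv (φ₁ ∘ φ₂)) s
      = deriv (deriv φ₁) t * deriv φ₂ s * deriv φ₂ s + deriv φ₁ t * deriv (deriv φ₂) s := by
    have heq : deriv (φ₁ ∘ φ₂) =ᶠ[nhds s] fun u => deriv φ₁ (φ₂ u) * deriv φ₂ u :=
      Filter.eventuallyEq_of_mem hmem hderiv
    rw [heq.deriv_eq]
    have hfd : DifferentiableAt ℝ (fun u => deriv φ₁ (φ₂ u)) s :=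
      (hd1' t htI).comp s (hd2 s hs)
    rw [deriv_fun_mul hfd (hd2' s hs)]
    have hcomp : deriv (fun u => deriv φ₁ (φ₂ u)) s = deriv (deriv φ₁) t * deriv φ₂ s :=
      deriv_comp s (hd1' t htI) (hd2 s hs)
    rw [hcomp]
  -- abbreviations
  set a1 := |deriv φ₁ t| with ha1
  set b1 := |deriv (deriv φ₁) t| with hb1
  set a2 := |deriv φ₂ s| with ha2
  set b2 := |deriv (deriv φ₂) s| with hb2
  set c := φ₁ t with hcdef
  have ha1n : 0 ≤ a1 := abs_nonneg _
  have hb1n : 0 ≤ b1 := abs_nonneg _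
  have ha2n : 0 ≤ a2 := abs_nonneg _
  have hb2n : 0 ≤ b2 := abs_nonneg _
  set A1 := t * a1 / c with hA1
  set B1 := t ^ 2 * b1 / c with hB1
  set A2 := s * a2 / t with hA2
  set B2 := s ^ 2 * b2 / t with hB2
  have hA1n : 0 ≤ A1 := by positivity
  have hB1n : 0 ≤ B1 := by positivity
  have hA2n : 0 ≤ A2 := by positivity
  have hB2n : 0 ≤ B2 := by positivity
  have hP1 : (0:ℝ) ≤ 1 + A1 + B1 := by positivity
  have hP2 : (0:ℝ) ≤ 1 + A2 + B2 := by positivity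
  have hval : (φ₁ ∘ φ₂) s = c := rfl
  have htne : t ≠ 0 := ht0.ne'
  have hcne : c ≠ 0 := hc.ne'
  clear_value A1 B1 A2 B2
  clear_value a1 b1 a2 b2 c
  clear_value t
  -- pointwise real bound
  have hreal : 1 + s * |deriv (φ₁ ∘ φ₂) s| / (φ₁ ∘ φ₂) s
      + s ^ 2 * |deriv (deriv (φ₁ ∘ φ₂)) s| / (φ₁ ∘ φ₂) s
      ≤ (1 + A1 + B1) * (1 + A2 + B2) ^ 2 := by
    rw [hval, hD1, hD2]
    have e1 : s * |deriv φ₁ t * deriv φ₂ s| / c = A1 * A2 := by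
      rw [abs_mul, hA1, hA2, ha1, ha2]
      field_simp
    have e2 : s ^ 2 * |deriv (deriv φ₁) t * deriv φ₂ s * deriv φ₂ s
        + deriv φ₁ t * deriv (deriv φ₂) s| / c ≤ B1 * A2 ^ 2 + A1 * B2 := by
      have habs : |deriv (deriv φ₁) t * deriv φ₂ s * deriv φ₂ s
          + deriv φ₁ t * deriv (deriv φ₂) s| ≤ b1 * a2 * a2 + a1 * b2 := by
        calc _ ≤ |deriv (deriv φ₁) t * deriv φ₂ s * deriv φ₂ s|
              + |deriv φ₁ t * deriv (deriv φ₂) s| := abs_add_le _ _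
          _ = b1 * a2 * a2 + a1 * b2 := by
              rw [abs_mul, abs_mul, abs_mul, ← hb1, ← ha2, ← ha1, ← hb2]
      have heq2 : B1 * A2 ^ 2 + A1 * B2 = s ^ 2 * (b1 * a2 * a2 + a1 * b2) / c := by
        rw [hB1, hA2, hA1, hB2]
        field_simp
      rw [heq2]
      gcongr
    calc 1 + s * |deriv φ₁ t * deriv φ₂ s| / c
        + s ^ 2 * |deriv (deriv φ₁) t * deriv φ₂ s * deriv φ₂ s
          + deriv φ₁ t * deriv (deriv φ₂) s| / c
        ≤ 1 + A1 * A2 + (B1 * A2 ^ 2 + A1 * B2) := by rw [e1]; linarith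
      _ ≤ (1 + A1 + B1) * (1 + A2 + B2) ^ 2 := by nlinarith [mul_nonneg hA1n hA2n, mul_nonneg hB1n (mul_nonneg hA2n hA2n), mul_nonneg hA1n hB2n, mul_nonneg hA2n hB2n, mul_nonneg hB1n hB2n, mul_nonneg hB2n hB2n, mul_nonneg hA2n hA2n, mul_nonneg hB1n hA2n, mul_nonneg hB1n hB2n, mul_nonneg hA1n (mul_nonneg hA2n hB2n)]
  -- pass to ENNReal
  calc ENNReal.ofReal (1 + s * |deriv (φ₁ ∘ φ₂) s| / (φ₁ ∘ φ₂) s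
        + s ^ 2 * |deriv (deriv (φ₁ ∘ φ₂)) s| / (φ₁ ∘ φ₂) s)
      ≤ ENNReal.ofReal ((1 + A1 + B1) * (1 + A2 + B2) ^ 2) := ENNReal.ofReal_le_ofReal hreal
    _ = ENNReal.ofReal (1 + A1 + B1) * ENNReal.ofReal (1 + A2 + B2) ^ 2 := by
        rw [ENNReal.ofReal_mul hP1, ENNReal.ofReal_pow hP2]
    _ ≤ polyNorm φ₁ * polyNorm φ₂ ^ 2 := by
        have hN1 : ENNReal.ofReal (1 + A1 + B1) ≤ polyNorm φ₁ := by
          rw [polyNorm]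
          simp only [hA1, hB1, ha1, hb1, hcdef]
          exact le_biSup (fun u : ℝ => ENNReal.ofReal
            (1 + u * |deriv φ₁ u| / φ₁ u + u ^ 2 * |deriv (deriv φ₁) u| / φ₁ u)) htI
        have hN2 : ENNReal.ofReal (1 + A2 + B2) ≤ polyNorm φ₂ := by
          rw [polyNorm]
          simp only [hA2, hB2, ha2, hb2, ht]
          exact le_biSup (fun u : ℝ => ENNReal.ofReal
            (1 + u * |deriv φ₂ u| / φ₂ u + u ^ 2 * |deriv (deriv φ₂) u| / φ₂ u)) hs
        exact mul_le_mul' hN1 (pow_le_pow_left' hN2 2)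
end

section
/- Suppose U, V > 0 are smooth with (∂ₜ − Δ)U ≤ C·W·(U + V) − c|∇U|²/U and |（∂ₜ − Δ)V|/V + |∇V|²/V² ≤ C·W, with 0 < c < 1 < C. Then X = U/V satisfies (∂ₜ − Δ)X ≤ C'·C·W·(1 + X) − (c/2)|∇X|²/X for some constant C' = C'(c, C). -/
open InnerProductSpace

/-- The (Euclidean) Laplacian of a scalar function, as trace of the second derivative. -/
noncomputable def lapE {n : ℕ} (f : EuclideanSpace ℝ (Fin n) → ℝ)
    (x : EuclideanSpace ℝ (Fin n)) : ℝ :=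
  ∑ i : Fin n,
    fderiv ℝ (fun y => fderiv ℝ f y (EuclideanSpace.single i 1)) x (EuclideanSpace.single i 1)

lemma norm_gradient_sq {n : ℕ} (f : EuclideanSpace ℝ (Fin n) → ℝ) (x : EuclideanSpace ℝ (Fin n)) :
    ‖gradient f x‖ ^ 2 = ∑ i : Fin n, (fderiv ℝ f x (EuclideanSpace.single i 1)) ^ 2 := by
  have hg : ∀ i : Fin n, gradient f x i = fderiv ℝ f x (EuclideanSpace.single i 1) := by
    intro i
    have h1 : ⟪gradient f x, EuclideanSpace.single i (1:ℝ)⟫_ℝ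
        = fderiv ℝ f x (EuclideanSpace.single i 1) := InnerProductSpace.toDual_symm_apply
    rw [EuclideanSpace.inner_single_right] at h1
    simpa using h1
  rw [← real_inner_self_eq_norm_sq, PiLp.inner_apply]
  exact Finset.sum_congr rfl fun i _ => by simp [hg i]

lemma hasFDerivAt_div' {E : Type*} [NormedAddCommGroup E] [NormedSpace ℝ E] {u v : E → ℝ}
    {du dv : E →L[ℝ] ℝ} {x : E} (hu : HasFDerivAt u du x) (hv : HasFDerivAt v dv x)
    (hx : v x ≠ 0) :
    HasFDerivAt (fun y => u y / v y) ((v x)⁻¹ • du - (u x / (v x) ^ 2) • dv) x := by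
  have hinv : HasFDerivAt (fun y => (v y)⁻¹)
      ((-ContinuousLinearMap.mulLeftRight ℝ ℝ (v x)⁻¹ (v x)⁻¹).comp dv) x :=
    (hasFDerivAt_inv' hx).comp x hv
  have h2 := hu.mul hinv
  have he : (fun y => u y / v y) = fun y => u y * (v y)⁻¹ := by
    funext y; rw [div_eq_mul_inv]
  rw [he]
  refine h2.congr_fderiv ?_
  ext w
  simp [ContinuousLinearMap.smul_apply, ContinuousLinearMap.sub_apply,
    ContinuousLinearMap.comp_apply, ContinuousLinearMap.mulLeftRight_apply, smul_eq_mul]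
  field_simp
  ring

lemma lapE_div {n : ℕ} {u v : EuclideanSpace ℝ (Fin n) → ℝ} (hu : ContDiff ℝ (⊤ : ℕ∞) u)
    (hv : ContDiff ℝ (⊤ : ℕ∞) v) (hvne : ∀ y, v y ≠ 0) (x : EuclideanSpace ℝ (Fin n)) :
    lapE (fun y => u y / v y) x =
      lapE u x / v x - u x * lapE v x / (v x) ^ 2
        - 2 * (∑ i : Fin n, fderiv ℝ u x (EuclideanSpace.single i 1)
            * fderiv ℝ v x (EuclideanSpace.single i 1)) / (v x) ^ 2
        + 2 * u x * (∑ i : Fin n, (fderiv ℝ v x (EuclideanSpace.single i 1)) ^ 2) / (v x) ^ 3 := by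
  have hud : Differentiable ℝ u := hu.differentiable (by simp)
  have hvd : Differentiable ℝ v := hv.differentiable (by simp)
  set e : Fin n → EuclideanSpace ℝ (Fin n) := fun i => EuclideanSpace.single i 1 with he
  have key : ∀ i : Fin n,
      fderiv ℝ (fun y => fderiv ℝ (fun z => u z / v z) y (e i)) x (e i)
        = (fderiv ℝ (fun y => fderiv ℝ u y (e i)) x (e i) * v x
            - u x * fderiv ℝ (fun y => fderiv ℝ v y (e i)) x (e i)) / (v x) ^ 2
          - 2 * (fderiv ℝ u x (e i) * v x - u x * fderiv ℝ v x (e i))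
              * fderiv ℝ v x (e i) / (v x) ^ 3 := by
    intro i
    have hfun : (fun y => fderiv ℝ (fun z => u z / v z) y (e i))
        = fun y => (fderiv ℝ u y (e i) * v y - u y * fderiv ℝ v y (e i)) / (v y) ^ 2 := by
      funext y
      rw [(hasFDerivAt_div' (hud y).hasFDerivAt (hvd y).hasFDerivAt (hvne y)).fderiv]
      simp only [ContinuousLinearMap.coe_sub', Pi.sub_apply, ContinuousLinearMap.coe_smul',
        Pi.smul_apply, smul_eq_mul]
      field_simp [hvne y]
    rw [hfun]
    have hPu : ContDiff ℝ (⊤ : ℕ∞) (fun y => fderiv ℝ u y (e i)) :=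
      (ContinuousLinearMap.apply ℝ ℝ (e i)).contDiff.comp (hu.fderiv_right (by simp))
    have hPv : ContDiff ℝ (⊤ : ℕ∞) (fun y => fderiv ℝ v y (e i)) :=
      (ContinuousLinearMap.apply ℝ ℝ (e i)).contDiff.comp (hv.fderiv_right (by simp))
    have h1 : HasFDerivAt (fun y => fderiv ℝ u y (e i))
        (fderiv ℝ (fun y => fderiv ℝ u y (e i)) x) x :=
      (hPu.differentiable (by simp) x).hasFDerivAt
    have h2 : HasFDerivAt (fun y => fderiv ℝ v y (e i))
        (fderiv ℝ (fun y => fderiv ℝ v y (e i)) x) x :=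
      (hPv.differentiable (by simp) x).hasFDerivAt
    have hux : HasFDerivAt u (fderiv ℝ u x) x := (hud x).hasFDerivAt
    have hvx : HasFDerivAt v (fderiv ℝ v x) x := (hvd x).hasFDerivAt
    have hN := (h1.mul hvx).sub (hux.mul h2)
    have hv2 : HasFDerivAt (fun y => (v y) ^ 2)
        (v x • fderiv ℝ v x + v x • fderiv ℝ v x) x := by
      have := hvx.mul hvx
      have he2 : (fun y => (v y) ^ 2) = fun y => v y * v y := by funext y; ring
      rw [he2]; exact this
    have hdiv : HasFDerivAt (fun y => (fderiv ℝ u y (e i) * v y - u y * fderiv ℝ v y (e i)) / (v y) ^ 2) _ x :=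
      hasFDerivAt_div' hN hv2 (pow_ne_zero 2 (hvne x))
    rw [hdiv.fderiv]
    simp only [ContinuousLinearMap.coe_sub', Pi.sub_apply, ContinuousLinearMap.coe_smul',
      Pi.smul_apply, ContinuousLinearMap.add_apply, ContinuousLinearMap.coe_add',
      Pi.add_apply, smul_eq_mul]
    field_simp [hvne x]
    ring
  have hsplit : ∀ i : Fin n,
      (fderiv ℝ (fun y => fderiv ℝ u y (e i)) x (e i) * v x
          - u x * fderiv ℝ (fun y => fderiv ℝ v y (e i)) x (e i)) / (v x) ^ 2
        - 2 * (fderiv ℝ u x (e i) * v x - u x * fderiv ℝ v x (e i))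
            * fderiv ℝ v x (e i) / (v x) ^ 3
      = fderiv ℝ (fun y => fderiv ℝ u y (e i)) x (e i) * ((v x) / (v x) ^ 2)
        - fderiv ℝ (fun y => fderiv ℝ v y (e i)) x (e i) * (u x / (v x) ^ 2)
        - (fderiv ℝ u x (e i) * fderiv ℝ v x (e i)) * (2 / (v x) ^ 2)
        + (fderiv ℝ v x (e i)) ^ 2 * (2 * u x / (v x) ^ 3) := by
    intro i
    have := hvne x
    field_simp
    ring
  unfold lapE
  rw [Finset.sum_congr rfl fun i _ => (key i).trans (hsplit i)]
  simp only [Finset.sum_add_distrib, Finset.sum_sub_distrib, ← Finset.sum_mul]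
  have hv0 := hvne x
  field_simp
  ring

set_option maxHeartbeats 1000000 in
lemma alg_lemma {c C w a b Ut Vt Lu Lv Su Sv Suv : ℝ}
    (hc : 0 < c) (hC : 1 < C) (hw : 0 < w) (ha : 0 < a) (hb : 0 < b)
    (hSv0 : 0 ≤ Sv)
    (hmix : (-(c^2/2)*b^2) * Su + ((2*c - c^2)*a*b) * Suv + ((c^2/2 - 2*c)*a^2) * Sv
      ≤ 2*a^2 * Sv)
    (H1 : Ut - Lu ≤ C*w*(a+b) - c*Su/a)
    (H2 : |Vt - Lv|/b + Sv/b^2 ≤ C*w) :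
    (Ut*b - a*Vt)/b^2 - (Lu/b - a*Lv/b^2 - 2*Suv/b^2 + 2*a*Sv/b^3)
      ≤ (2+2/c)*C*w*(1 + a/b) - (c/2)*((b^2*Su - 2*a*b*Suv + a^2*Sv)/b^4)/(a/b) := by
  have hC0 : (0:ℝ) < C := by linarith
  have hSv : 0 ≤ Sv/b^2 := div_nonneg hSv0 (pow_pos hb 2).le
  have h2a : |Vt - Lv| ≤ C*w*b := by
    have h : |Vt - Lv| / b ≤ C*w := by linarith
    rw [div_le_iff₀ hb] at h; linarith
  have h2c : Sv ≤ C*w*b^2 := by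
    have h : Sv / b^2 ≤ C*w := by
      have : 0 ≤ |Vt - Lv|/b := div_nonneg (abs_nonneg _) hb.le
      linarith
    rw [div_le_iff₀ (pow_pos hb 2)] at h; linarith
  have habs := abs_le.mp h2a
  have H1' : a*(Ut - Lu) ≤ C*w*(a+b)*a - c*Su := by
    have h := mul_le_mul_of_nonneg_left H1 ha.le
    calc a*(Ut-Lu) ≤ a*(C*w*(a+b) - c*Su/a) := h
    _ = C*w*(a+b)*a - c*Su := by field_simp
  have F1 : 2*c*b^3*(a*(Ut - Lu)) ≤ 2*c*b^3*(C*w*(a+b)*a - c*Su) :=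
    mul_le_mul_of_nonneg_left H1' (by positivity)
  have F2 : 2*c*a^2*b^2*(Lv - Vt) ≤ 2*c*a^2*b^2*(C*w*b) :=
    mul_le_mul_of_nonneg_left (by linarith [habs.1]) (by positivity)
  have F3 : 2*b*((-(c^2/2)*b^2) * Su + ((2*c - c^2)*a*b) * Suv + ((c^2/2 - 2*c)*a^2) * Sv)
      ≤ 2*b*(2*a^2 * Sv) := mul_le_mul_of_nonneg_left hmix (by positivity)
  have F4 : 4*a^2*b*Sv ≤ 4*a^2*b*(C*w*b^2) :=
    mul_le_mul_of_nonneg_left h2c (by positivity)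
  have F5 : 0 ≤ C*w*(a*b^4) := le_of_lt (mul_pos (mul_pos hC0 hw) (by positivity))
  have F6 : 0 ≤ c*(C*w*(a*b^4)) := le_of_lt (mul_pos hc (mul_pos (mul_pos hC0 hw) (by positivity)))
  rw [← sub_nonneg]
  have key : (2+2/c)*C*w*(1 + a/b) - (c/2)*((b^2*Su - 2*a*b*Suv + a^2*Sv)/b^4)/(a/b)
      - ((Ut*b - a*Vt)/b^2 - (Lu/b - a*Lv/b^2 - 2*Suv/b^2 + 2*a*Sv/b^3))
      = ((4*c+4)*C*w*(a*b^4 + a^2*b^3) - c^2*b*(b^2*Su - 2*a*b*Suv + a^2*Sv)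
          - (2*c*a*b^3*Ut - 2*c*a^2*b^2*Vt - 2*c*a*b^3*Lu + 2*c*a^2*b^2*Lv
              + 4*c*a*b^2*Suv - 4*c*a^2*b*Sv)) / (2*c*a*b^4) := by
    field_simp
    ring
  rw [key]
  apply div_nonneg _ (by positivity)
  nlinarith [F1, F2, F3, F4, F5, F6]

/-- If `(∂ₜ − Δ)U ≤ C·W·(U + V) − c|∇U|²/U` and `|(∂ₜ − Δ)V|/V + |∇V|²/V² ≤ C·W` with
`0 < c < 1 < C`, then `X = U/V` satisfies
`(∂ₜ − Δ)X ≤ C'·C·W·(1 + X) − (c/2)|∇X|²/X` for some constant `C' = C'(c, C)`. -/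
theorem quotient_heat_inequality {n : ℕ} (c C T : ℝ) (hc : 0 < c) (hc1 : c < 1) (hC : 1 < C)
    (hT : 0 < T)
    (U V W : EuclideanSpace ℝ (Fin n) → ℝ → ℝ)
    (hUs : ContDiff ℝ (⊤ : ℕ∞) (fun p : EuclideanSpace ℝ (Fin n) × ℝ => U p.1 p.2))
    (hVs : ContDiff ℝ (⊤ : ℕ∞) (fun p : EuclideanSpace ℝ (Fin n) × ℝ => V p.1 p.2))
    (hUpos : ∀ x, ∀ t ∈ Set.Icc (0 : ℝ) T, 0 < U x t)
    (hVpos : ∀ x, ∀ t ∈ Set.Icc (0 : ℝ) T, 0 < V x t)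
    (hWpos : ∀ x, ∀ t ∈ Set.Icc (0 : ℝ) T, 0 < W x t)
    (hU : ∀ x, ∀ t ∈ Set.Icc (0 : ℝ) T,
      deriv (U x) t - lapE (fun y => U y t) x
        ≤ C * W x t * (U x t + V x t)
          - c * ‖gradient (fun y => U y t) x‖ ^ 2 / U x t)
    (hV : ∀ x, ∀ t ∈ Set.Icc (0 : ℝ) T,
      |deriv (V x) t - lapE (fun y => V y t) x| / V x t
          + ‖gradient (fun y => V y t) x‖ ^ 2 / (V x t) ^ 2
        ≤ C * W x t) :
    ∃ C' : ℝ, 0 < C' ∧ ∀ x, ∀ t ∈ Set.Icc (0 : ℝ) T,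
      deriv (fun s => U x s / V x s) t - lapE (fun y => U y t / V y t) x
        ≤ C' * C * W x t * (1 + U x t / V x t)
          - (c / 2) * ‖gradient (fun y => U y t / V y t) x‖ ^ 2 / (U x t / V x t) := by
  refine ⟨2 + 2/c, by positivity, ?_⟩
  intro x t ht
  have ha : 0 < U x t := hUpos x t ht
  have hb : 0 < V x t := hVpos x t ht
  have hw : 0 < W x t := hWpos x t ht
  have hvne : ∀ y, V y t ≠ 0 := fun y => (hVpos y t ht).ne'
  have hu : ContDiff ℝ (⊤ : ℕ∞) (fun y => U y t) := hUs.comp (contDiff_id.prodMk contDiff_const)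
  have hv : ContDiff ℝ (⊤ : ℕ∞) (fun y => V y t) := hVs.comp (contDiff_id.prodMk contDiff_const)
  have hUxs : ContDiff ℝ (⊤ : ℕ∞) (fun s => U x s) := hUs.comp (contDiff_const.prodMk contDiff_id)
  have hVxs : ContDiff ℝ (⊤ : ℕ∞) (fun s => V x s) := hVs.comp (contDiff_const.prodMk contDiff_id)
  -- time derivative of the quotient
  have hder : deriv (fun s => U x s / V x s) t
      = (deriv (U x) t * V x t - U x t * deriv (V x) t) / (V x t) ^ 2 :=
    (((hUxs.differentiable (by simp) t).hasDerivAt).div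
      ((hVxs.differentiable (by simp) t).hasDerivAt) hb.ne').deriv
  -- gradient of the quotient
  have hgX : ‖gradient (fun y => U y t / V y t) x‖ ^ 2
      = ((V x t)^2 * (∑ i : Fin n, (fderiv ℝ (fun y => U y t) x (EuclideanSpace.single i 1))^2)
          - 2 * (U x t) * (V x t)
            * (∑ i : Fin n, fderiv ℝ (fun y => U y t) x (EuclideanSpace.single i 1)
                * fderiv ℝ (fun y => V y t) x (EuclideanSpace.single i 1))
          + (U x t)^2
            * (∑ i : Fin n, (fderiv ℝ (fun y => V y t) x (EuclideanSpace.single i 1))^2))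
        / (V x t)^4 := by
    rw [norm_gradient_sq]
    have hterm : ∀ i : Fin n,
        (fderiv ℝ (fun y => U y t / V y t) x (EuclideanSpace.single i 1))^2
          = ((V x t)^2 * (fderiv ℝ (fun y => U y t) x (EuclideanSpace.single i 1))^2
              - 2 * (U x t) * (V x t)
                * (fderiv ℝ (fun y => U y t) x (EuclideanSpace.single i 1)
                    * fderiv ℝ (fun y => V y t) x (EuclideanSpace.single i 1))
              + (U x t)^2
                * (fderiv ℝ (fun y => V y t) x (EuclideanSpace.single i 1))^2) / (V x t)^4 := by
      intro i
      rw [(hasFDerivAt_div' ((hu.differentiable (by simp) x).hasFDerivAt)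
        ((hv.differentiable (by simp) x).hasFDerivAt) (hvne x)).fderiv]
      simp only [ContinuousLinearMap.coe_sub', Pi.sub_apply, ContinuousLinearMap.coe_smul',
        Pi.smul_apply, smul_eq_mul]
      field_simp
      ring
    rw [Finset.sum_congr rfl fun i _ => hterm i, ← Finset.sum_div]
    rw [Finset.sum_add_distrib, Finset.sum_sub_distrib, ← Finset.mul_sum, ← Finset.mul_sum,
      ← Finset.mul_sum]
  -- hypotheses in coordinates
  have H1 := hU x t ht
  rw [norm_gradient_sq] at H1
  have H2 := hV x t ht
  rw [norm_gradient_sq] at H2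
  -- mixed-term estimate, summed from a pointwise quadratic inequality
  have hmix0 : ∀ i : Fin n,
      (-(c^2/2)*(V x t)^2) * (fderiv ℝ (fun y => U y t) x (EuclideanSpace.single i 1))^2
        + ((2*c - c^2)*(U x t)*(V x t))
            * (fderiv ℝ (fun y => U y t) x (EuclideanSpace.single i 1)
                * fderiv ℝ (fun y => V y t) x (EuclideanSpace.single i 1))
        + ((c^2/2 - 2*c)*(U x t)^2)
            * (fderiv ℝ (fun y => V y t) x (EuclideanSpace.single i 1))^2
      ≤ 2*(U x t)^2 * (fderiv ℝ (fun y => V y t) x (EuclideanSpace.single i 1))^2 := by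
    intro i
    set p := fderiv ℝ (fun y => U y t) x (EuclideanSpace.single i 1)
    set q := fderiv ℝ (fun y => V y t) x (EuclideanSpace.single i 1)
    nlinarith [sq_nonneg (c*(p*(V x t)) - (2-c)*((U x t)*q)),
      mul_nonneg (mul_nonneg hc.le (by linarith : (0:ℝ) ≤ 4 - c)) (sq_nonneg ((U x t)*q))]
  have hmix : (-(c^2/2)*(V x t)^2)
        * (∑ i : Fin n, (fderiv ℝ (fun y => U y t) x (EuclideanSpace.single i 1))^2)
      + ((2*c - c^2)*(U x t)*(V x t))
          * (∑ i : Fin n, fderiv ℝ (fun y => U y t) x (EuclideanSpace.single i 1)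
              * fderiv ℝ (fun y => V y t) x (EuclideanSpace.single i 1))
      + ((c^2/2 - 2*c)*(U x t)^2)
          * (∑ i : Fin n, (fderiv ℝ (fun y => V y t) x (EuclideanSpace.single i 1))^2)
      ≤ 2*(U x t)^2
          * (∑ i : Fin n, (fderiv ℝ (fun y => V y t) x (EuclideanSpace.single i 1))^2) := by
    have h := Finset.sum_le_sum fun i (_ : i ∈ Finset.univ) => hmix0 i
    rw [Finset.sum_add_distrib, Finset.sum_add_distrib, ← Finset.mul_sum, ← Finset.mul_sum,
      ← Finset.mul_sum, ← Finset.mul_sum] at h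
    exact h
  have hSv0 : (0:ℝ)
      ≤ ∑ i : Fin n, (fderiv ℝ (fun y => V y t) x (EuclideanSpace.single i 1))^2 :=
    Finset.sum_nonneg fun i _ => sq_nonneg _
  -- assemble
  rw [hder, lapE_div hu hv hvne x, hgX]
  have halg := alg_lemma (Ut := deriv (U x) t) (Vt := deriv (V x) t)
    (Lu := lapE (fun y => U y t) x) (Lv := lapE (fun y => V y t) x)
    hc hC hw ha hb hSv0 hmix H1 H2
  calc (deriv (U x) t * V x t - U x t * deriv (V x) t) / V x t ^ 2
      - (lapE (fun y => U y t) x / V x t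
          - U x t * lapE (fun y => V y t) x / V x t ^ 2
          - 2 * (∑ i : Fin n, fderiv ℝ (fun y => U y t) x (EuclideanSpace.single i 1)
              * fderiv ℝ (fun y => V y t) x (EuclideanSpace.single i 1)) / V x t ^ 2
          + 2 * U x t * (∑ i : Fin n,
              (fderiv ℝ (fun y => V y t) x (EuclideanSpace.single i 1))^2) / V x t ^ 3)
      ≤ (2+2/c)*C*(W x t)*(1 + U x t / V x t)
          - (c/2)*(((V x t)^2
              * (∑ i : Fin n, (fderiv ℝ (fun y => U y t) x (EuclideanSpace.single i 1))^2)
            - 2*(U x t)*(V x t)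
              * (∑ i : Fin n, fderiv ℝ (fun y => U y t) x (EuclideanSpace.single i 1)
                  * fderiv ℝ (fun y => V y t) x (EuclideanSpace.single i 1))
            + (U x t)^2
              * (∑ i : Fin n, (fderiv ℝ (fun y => V y t) x (EuclideanSpace.single i 1))^2))
            / (V x t)^4) / (U x t / V x t) := by
        convert halg using 2 <;> ring
    _ = (2 + 2 / c) * C * W x t * (1 + U x t / V x t)
        - c / 2 * ((V x t ^ 2
              * ∑ i : Fin n, fderiv ℝ (fun y => U y t) x (EuclideanSpace.single i 1) ^ 2
            - 2 * U x t * V x t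
              * ∑ i : Fin n, fderiv ℝ (fun y => U y t) x (EuclideanSpace.single i 1)
                  * fderiv ℝ (fun y => V y t) x (EuclideanSpace.single i 1)
            + U x t ^ 2
              * ∑ i : Fin n, fderiv ℝ (fun y => V y t) x (EuclideanSpace.single i 1) ^ 2)
          / V x t ^ 4) / (U x t / V x t) := by ring
end
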